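/- arXiv:2002.08280 — 2 statements merged into one kernel-verified Lean document; each statement's English description precedes it below -/
import Mathlib

section
/- Let C be a d-cuboid in ℝⁿ with top vertex α (all coordinates at their upper value), and let L be a partial lift defined on the vertices C \ {α} with values in Γ(G,u) satisfying all volume conditions for faces contained in C \ {α}. Then |α − C|_L ≥ 0, i.e., L(α') summed with appropriate alternating signs over the remaining vertices α' of C (with sign (−1)^{ord_C(α')}) is ≥ 0. -/
/-! Here `|α − C|_L = L(α) − |C|_L`, which is `-(C.volExcept (fun _ => true) L)`. Pick a proper
coordinate `i` of `C`. Since `|C|_L = |∂ᵢC|_L − |∂'ᵢC|_L` and `∂ᵢC` has the same top vertex `α`,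
`|α − C|_L = |α − ∂ᵢC|_L + |∂'ᵢC|_L`. The lower facet `∂'ᵢC` avoids `α`, so `|∂'ᵢC|_L ≥ 0`, and
`|α − ∂ᵢC|_L ≥ 0` by induction on the number of proper coordinates; a cuboid without proper
coordinates has `α` as its only vertex. -/

/-- A cuboid in `ℝⁿ`, determined by reals `lo i ≤ hi i`; its dimension set is
`{i | lo i < hi i}` and its vertices are the tuples with `i`-th coordinate in
`{lo i, hi i}`. -/
structure Cuboid (n : ℕ) where
  lo : Fin n → ℝ
  hi : Fin n → ℝ
  lo_le_hi : ∀ i, lo i ≤ hi i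

namespace Cuboid

variable {n : ℕ}

/-- `i ∈ Dim(C)`. -/
def IsDim (C : Cuboid n) (i : Fin n) : Prop := C.lo i < C.hi i

/-- The admissible vertex selectors: on degenerate coordinates we take the (unique)
upper value. `φ i = true` selects `hi i`, `φ i = false` selects `lo i`. -/
def Allowed (C : Cuboid n) (φ : Fin n → Bool) : Prop := ∀ i, ¬C.IsDim i → φ i = true

/-- The vertex of `C` selected by `φ`. -/
def vertex (C : Cuboid n) (φ : Fin n → Bool) : Fin n → ℝ :=
  fun i => if φ i then C.hi i else C.lo i

/-- The set of vertices of `C`, as points of `ℝⁿ`. -/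
def vertexSet (C : Cuboid n) : Set (Fin n → ℝ) :=
  {p | ∃ φ, C.Allowed φ ∧ p = C.vertex φ}

/-- The upper facet `∂ᵢ(C)` (coordinate `i` fixed at `hi i`). -/
def upperFacet (C : Cuboid n) (i : Fin n) : Cuboid n :=
  ⟨Function.update C.lo i (C.hi i), C.hi, fun j => by
    rcases eq_or_ne j i with h | h
    · subst h; simp
    · simpa [Function.update_of_ne h] using C.lo_le_hi j⟩

/-- The lower facet `∂'ᵢ(C)` (coordinate `i` fixed at `lo i`). -/
def lowerFacet (C : Cuboid n) (i : Fin n) : Cuboid n :=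
  ⟨C.lo, Function.update C.hi i (C.lo i), fun j => by
    rcases eq_or_ne j i with h | h
    · subst h; simp
    · simpa [Function.update_of_ne h] using C.lo_le_hi j⟩

/-- The degenerate cuboid consisting of the single point `p`. -/
def pt (p : Fin n → ℝ) : Cuboid n := ⟨p, p, fun _ => le_rfl⟩

open scoped Classical in
/-- The finite set of admissible vertex selectors of `C`. -/
noncomputable def allowedSet (C : Cuboid n) : Finset (Fin n → Bool) :=
  Finset.univ.filter fun φ => C.Allowed φ

/-- The number of lower coordinates chosen by `φ`; the order of the corresponding
vertex is `lowerCount φ + 1`. -/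
def lowerCount {n : ℕ} (φ : Fin n → Bool) : ℕ :=
  (Finset.univ.filter fun i => φ i = false).card

/-- The "volume" `|C|_f = Σ_α (−1)^{ord_C(α)+1} f(α)` over the vertices of `C`. -/
noncomputable def vol {G : Type*} [AddCommGroup G] (C : Cuboid n)
    (f : (Fin n → ℝ) → G) : G :=
  ∑ φ ∈ C.allowedSet, (-1 : ℤ) ^ lowerCount φ • f (C.vertex φ)

/-- The vertex expansion of `C` with the vertex selected by `φ₀` omitted. -/
noncomputable def volExcept {G : Type*} [AddCommGroup G] (C : Cuboid n)
    (φ₀ : Fin n → Bool) (f : (Fin n → ℝ) → G) : G :=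
  ∑ φ ∈ C.allowedSet.erase φ₀, (-1 : ℤ) ^ lowerCount φ • f (C.vertex φ)

end Cuboid


namespace Cuboid

variable {n : ℕ} {C : Cuboid n} {i j : Fin n} {φ : Fin n → Bool}

lemma mem_allowedSet : φ ∈ C.allowedSet ↔ C.Allowed φ := by
  classical
  simp [allowedSet]

lemma allowed_top (C : Cuboid n) : C.Allowed fun _ => true := fun _ _ => rfl

lemma isDim_upperFacet : (C.upperFacet i).IsDim j ↔ C.IsDim j ∧ j ≠ i := by
  rcases eq_or_ne j i with rfl | h
  · simp [IsDim, upperFacet]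
  · simp [IsDim, upperFacet, h]

lemma isDim_lowerFacet : (C.lowerFacet i).IsDim j ↔ C.IsDim j ∧ j ≠ i := by
  rcases eq_or_ne j i with rfl | h
  · simp [IsDim, lowerFacet]
  · simp [IsDim, lowerFacet, h]

lemma allowed_iff_of_isDim_iff {D : Cuboid n} (hi : C.IsDim i)
    (hD : ∀ j, D.IsDim j ↔ C.IsDim j ∧ j ≠ i) :
    D.Allowed φ ↔ C.Allowed φ ∧ φ i = true := by
  refine ⟨fun h => ⟨fun j hj => h j (by simp [hD, hj]), h i (by simp [hD])⟩, ?_⟩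
  rintro ⟨hC, hφi⟩ j hj
  rcases eq_or_ne j i with rfl | hne
  · exact hφi
  · exact hC j fun hCj => hj ((hD j).2 ⟨hCj, hne⟩)

lemma allowed_upperFacet (hi : C.IsDim i) :
    (C.upperFacet i).Allowed φ ↔ C.Allowed φ ∧ φ i = true :=
  allowed_iff_of_isDim_iff hi fun _ => isDim_upperFacet

lemma allowed_lowerFacet (hi : C.IsDim i) :
    (C.lowerFacet i).Allowed φ ↔ C.Allowed φ ∧ φ i = true :=
  allowed_iff_of_isDim_iff hi fun _ => isDim_lowerFacet

lemma Allowed.update (hφ : C.Allowed φ) (hi : C.IsDim i) (b : Bool) :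
    C.Allowed (Function.update φ i b) := by
  intro j hj
  rw [Function.update_of_ne fun h : j = i => hj (h ▸ hi)]
  exact hφ j hj

lemma vertex_upperFacet : (C.upperFacet i).vertex φ = C.vertex (Function.update φ i true) := by
  funext j
  rcases eq_or_ne j i with rfl | hne
  · simp [vertex, upperFacet]
  · simp [vertex, upperFacet, Function.update_of_ne hne]

lemma vertex_lowerFacet : (C.lowerFacet i).vertex φ = C.vertex (Function.update φ i false) := by
  funext j
  rcases eq_or_ne j i with rfl | hne
  · simp [vertex, lowerFacet]
  · simp [vertex, lowerFacet, Function.update_of_ne hne]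

lemma lowerCount_update_false (h : φ i = true) :
    lowerCount (Function.update φ i false) = lowerCount φ + 1 := by
  classical
  have : (Finset.univ.filter fun j => Function.update φ i false j = false)
      = insert i (Finset.univ.filter fun j => φ j = false) := by
    ext j
    rcases eq_or_ne j i with rfl | hj
    · simp
    · simp [hj]
  rw [lowerCount, this, Finset.card_insert_of_notMem (by simp [h]), lowerCount]

section Volume

variable {G : Type*} [AddCommGroup G]

lemma vol_eq_volExcept_top_add (C : Cuboid n) (f : (Fin n → ℝ) → G) :
    C.vol f = C.volExcept (fun _ => true) f + f (C.vertex fun _ => true) := by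
  have htop : lowerCount (n := n) (fun _ => true) = 0 := by simp [lowerCount]
  rw [vol, volExcept, ← Finset.add_sum_erase _ _ (mem_allowedSet.2 C.allowed_top), htop,
    pow_zero, one_smul, add_comm]

lemma vol_upperFacet (hi : C.IsDim i) (f : (Fin n → ℝ) → G) :
    (C.upperFacet i).vol f
      = ∑ φ ∈ C.allowedSet with φ i = true, (-1 : ℤ) ^ lowerCount φ • f (C.vertex φ) := by
  refine Finset.sum_congr (by ext φ; simp [mem_allowedSet, allowed_upperFacet hi]) ?_
  intro φ hφ
  rw [Finset.mem_filter] at hφ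
  rw [vertex_upperFacet, ← hφ.2, Function.update_eq_self]

/-- A vertex of `∂'ᵢC`, selected by some `ψ` with `ψ i = true`, is the vertex of `C` selected by
`ψ` with coordinate `i` lowered, which raises `lowerCount` by one and flips the sign. -/
lemma vol_lowerFacet (hi : C.IsDim i) (f : (Fin n → ℝ) → G) :
    (C.lowerFacet i).vol f
      = -∑ φ ∈ C.allowedSet with ¬φ i = true, (-1 : ℤ) ^ lowerCount φ • f (C.vertex φ) := by
  rw [← Finset.sum_neg_distrib]
  refine Finset.sum_nbij' (Function.update · i false) (Function.update · i true) ?_ ?_ ?_ ?_ ?_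
  · intro ψ hψ
    rw [mem_allowedSet, allowed_lowerFacet hi] at hψ
    simpa [mem_allowedSet] using hψ.1.update hi false
  · intro φ hφ
    rw [Finset.mem_filter, mem_allowedSet] at hφ
    rw [mem_allowedSet, allowed_lowerFacet hi]
    exact ⟨hφ.1.update hi true, Function.update_self ..⟩
  · intro ψ hψ
    rw [mem_allowedSet, allowed_lowerFacet hi] at hψ
    simp only [Function.update_idem, ← hψ.2, Function.update_eq_self]
  · intro φ hφ
    rw [Finset.mem_filter, Bool.not_eq_true] at hφ
    simp only [Function.update_idem, ← hφ.2, Function.update_eq_self]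
  · intro ψ hψ
    rw [mem_allowedSet, allowed_lowerFacet hi] at hψ
    rw [vertex_lowerFacet, lowerCount_update_false hψ.2, pow_succ, mul_neg_one, neg_smul, neg_neg]

lemma vol_eq_upperFacet_sub_lowerFacet (hi : C.IsDim i) (f : (Fin n → ℝ) → G) :
    C.vol f = (C.upperFacet i).vol f - (C.lowerFacet i).vol f := by
  classical
  rw [vol_upperFacet hi, vol_lowerFacet hi, sub_neg_eq_add,
    Finset.sum_filter_add_sum_filter_not, vol]

lemma volExcept_top_eq_upperFacet_sub_lowerFacet (hi : C.IsDim i) (f : (Fin n → ℝ) → G) :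
    C.volExcept (fun _ => true) f
      = (C.upperFacet i).volExcept (fun _ => true) f - (C.lowerFacet i).vol f := by
  have h := vol_eq_upperFacet_sub_lowerFacet hi f
  rw [vol_eq_volExcept_top_add, vol_eq_volExcept_top_add, vertex_upperFacet,
    Function.update_eq_self_iff.2 rfl] at h
  exact add_right_cancel (h.trans (sub_add_eq_add_sub ..).symm)

lemma volExcept_top_eq_zero (h : ∀ i, ¬C.IsDim i) (f : (Fin n → ℝ) → G) :
    C.volExcept (fun _ => true) f = 0 := by
  have : C.allowedSet.erase (fun _ => true) = ∅ := by
    ext φ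
    simp only [Finset.mem_erase, mem_allowedSet, Finset.notMem_empty, iff_false, not_and]
    exact fun hne hφ => hne (funext fun i => hφ i (h i))
  rw [volExcept, this, Finset.sum_empty]

end Volume

lemma upperFacet_vertexSet_subset (hi : C.IsDim i) :
    (C.upperFacet i).vertexSet ⊆ C.vertexSet := by
  rintro p ⟨φ, hφ, rfl⟩
  rw [allowed_upperFacet hi] at hφ
  exact ⟨φ, hφ.1, by rw [vertex_upperFacet, ← hφ.2, Function.update_eq_self]⟩

lemma lowerFacet_vertexSet_subset (hi : C.IsDim i) :
    (C.lowerFacet i).vertexSet ⊆ C.vertexSet \ {C.vertex fun _ => true} := by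
  rintro p ⟨ψ, hψ, rfl⟩
  rw [allowed_lowerFacet hi] at hψ
  refine ⟨⟨_, hψ.1.update hi false, vertex_lowerFacet⟩, fun htop => hi.ne ?_⟩
  simpa [vertex, lowerFacet] using congrFun (Set.mem_singleton_iff.1 htop) i

lemma ncard_isDim_upperFacet_lt (hi : C.IsDim i) :
    {j | (C.upperFacet i).IsDim j}.ncard < {j | C.IsDim j}.ncard := by
  refine Set.ncard_lt_ncard ?_
  convert Set.sdiff_singleton_ssubset.2 (Set.mem_ofPred.2 hi) using 1
  ext j
  simp [isDim_upperFacet]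

theorem volExcept_top_nonpos {G : Type*} [AddCommGroup G] [PartialOrder G]
    [IsOrderedAddMonoid G] (C : Cuboid n) (L : (Fin n → ℝ) → G)
    (hL : ∀ D : Cuboid n, D.vertexSet ⊆ C.vertexSet \ {C.vertex fun _ => true} → 0 ≤ D.vol L) :
    C.volExcept (fun _ => true) L ≤ 0 := by
  by_cases hd : ∃ i, C.IsDim i
  · obtain ⟨i, hi⟩ := hd
    have hupper : (C.upperFacet i).volExcept (fun _ => true) L ≤ 0 := by
      refine volExcept_top_nonpos (C.upperFacet i) L fun D hD => hL D (hD.trans ?_)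
      rw [vertex_upperFacet, Function.update_eq_self_iff.2 rfl]
      exact Set.sdiff_subset_sdiff_left (upperFacet_vertexSet_subset hi)
    have hlower : 0 ≤ (C.lowerFacet i).vol L := hL _ (lowerFacet_vertexSet_subset hi)
    rw [volExcept_top_eq_upperFacet_sub_lowerFacet hi]
    exact sub_nonpos_of_le (hupper.trans hlower)
  · exact (volExcept_top_eq_zero (not_exists.1 hd) L).le
termination_by {j | C.IsDim j}.ncard
decreasing_by exact ncard_isDim_upperFacet_lt hi

end Cuboid

open Cuboid in
theorem top_vertex_lower_bound_general {n : ℕ} {G : Type*} [AddCommGroup G] [PartialOrder G] [IsOrderedAddMonoid G] (u : G)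
    (C : Cuboid n) (L : (Fin n → ℝ) → G)
    (hlift : ∀ D : Cuboid n,
      D.vertexSet ⊆ C.vertexSet \ {C.vertex fun _ => true} →
        D.vol L ∈ Set.Icc (0 : G) u) :
    0 ≤ -(C.volExcept (fun _ => true) L) :=
  neg_nonneg.2 (volExcept_top_nonpos C L fun D hD => (hlift D hD).1)

open Cuboid in
/-- Let `C` be a cuboid with top vertex `α` (all coordinates at their upper value)
and `L` a partial lift with values in `Γ(G,u) = [0,u]` defined on the vertices of
`C` other than `α` (all volume conditions for cuboids inside this domain hold).
Then `|α − C|_L ≥ 0`. -/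
theorem top_vertex_lower_bound {n : ℕ} {G : Type*} [AddCommGroup G] [PartialOrder G] [IsOrderedAddMonoid G] (u : G)
    (C : Cuboid n) (L : (Fin n → ℝ) → G)
    (hval : ∀ p ∈ C.vertexSet \ {C.vertex fun _ => true}, L p ∈ Set.Icc (0 : G) u)
    (hlift : ∀ D : Cuboid n,
      D.vertexSet ⊆ C.vertexSet \ {C.vertex fun _ => true} →
        D.vol L ∈ Set.Icc (0 : G) u) :
    0 ≤ -(C.volExcept (fun _ => true) L) :=
  top_vertex_lower_bound_general u C L hlift
end

section
/- Let C₁, C₂ be a splitting of a cuboid C along coordinate i at value c (so C₁ shares all data with C except b^{C₁}_i = c, and C₂ shares all data with C except a^{C₂}_i = c). If a cuboid D satisfies D ⊆ C₁ ∪ C₂ (as vertex sets) and D ⊄ C, then D ⊆ C₁ or D ⊆ C₂. -/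
/-!
The vertex set of a cuboid is the product of the two-point sets `{lo j, hi j}`. The cuboids
`C`, `C₁`, `C₂` share these factors away from `i`, so a vertex of `D` lying outside `C` has
`i`-th coordinate `c`. Hence `c` is an endpoint of the `i`-th interval of `D`, and all
vertices of `D` lie on the same side of the hyperplane `xᵢ = c`.
-/

namespace Cuboid

variable {n : ℕ}

theorem mem_vertexSet_iff {C : Cuboid n} {p : Fin n → ℝ} :
    p ∈ C.vertexSet ↔ ∀ j, p j = C.lo j ∨ p j = C.hi j := by
  constructor
  · rintro ⟨φ, -, rfl⟩ j
    by_cases hφ : φ j <;> simp [vertex, hφ]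
  · intro hp
    refine ⟨fun j => decide (p j = C.hi j), fun j hj => ?_, funext fun j => ?_⟩
    · have hdeg : C.lo j = C.hi j := le_antisymm (C.lo_le_hi j) (not_lt.mp hj)
      simpa [hdeg] using hp j
    · by_cases hpj : p j = C.hi j
      · simp [vertex, hpj]
      · simpa [vertex, hpj] using hp j

theorem mem_vertexSet_iff_of_forall_ne {C E : Cuboid n} {i : Fin n}
    (hlo : ∀ j ≠ i, E.lo j = C.lo j) (hhi : ∀ j ≠ i, E.hi j = C.hi j) {p : Fin n → ℝ} :
    p ∈ E.vertexSet ↔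
      (p i = E.lo i ∨ p i = E.hi i) ∧ ∀ j ≠ i, p j = C.lo j ∨ p j = C.hi j := by
  rw [mem_vertexSet_iff]
  refine ⟨fun hp => ⟨hp i, fun j hj => hlo j hj ▸ hhi j hj ▸ hp j⟩,
    fun ⟨hpi, hp⟩ j => ?_⟩
  rcases eq_or_ne j i with rfl | hj
  · exact hpi
  · rw [hlo j hj, hhi j hj]
    exact hp j hj

theorem mem_Icc_of_mem_vertexSet {C : Cuboid n} {p : Fin n → ℝ} (hp : p ∈ C.vertexSet)
    (j : Fin n) : p j ∈ Set.Icc (C.lo j) (C.hi j) := by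
  rcases mem_vertexSet_iff.1 hp j with h | h <;> rw [h]
  exacts [Set.left_mem_Icc.2 (C.lo_le_hi j), Set.right_mem_Icc.2 (C.lo_le_hi j)]

end Cuboid

open Cuboid in
/-- Let `C₁, C₂` be a splitting of a cuboid `C` along coordinate `i` at `c`
(`C₁` has `hi i` replaced by `c`, `C₂` has `lo i` replaced by `c`). If a cuboid `D`
satisfies `D ⊆ C₁ ∪ C₂` (as vertex sets) and `D ⊄ C`, then `D ⊆ C₁` or `D ⊆ C₂`. -/
theorem cuboid_splitting_subset {n : ℕ} (C : Cuboid n) (i : Fin n) (c : ℝ)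
    (hc₁ : C.lo i < c) (hc₂ : c < C.hi i)
    (C₁ C₂ : Cuboid n)
    (hC₁lo : C₁.lo = C.lo) (hC₁hi : C₁.hi = Function.update C.hi i c)
    (hC₂lo : C₂.lo = Function.update C.lo i c) (hC₂hi : C₂.hi = C.hi)
    (D : Cuboid n)
    (hcov : D.vertexSet ⊆ C₁.vertexSet ∪ C₂.vertexSet)
    (hnot : ¬D.vertexSet ⊆ C.vertexSet) :
    D.vertexSet ⊆ C₁.vertexSet ∨ D.vertexSet ⊆ C₂.vertexSet := by
  set off : (Fin n → ℝ) → Prop := fun p => ∀ j ≠ i, p j = C.lo j ∨ p j = C.hi j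
  have hC (p) : p ∈ C.vertexSet ↔ (p i = C.lo i ∨ p i = C.hi i) ∧ off p :=
    mem_vertexSet_iff_of_forall_ne (fun _ _ => rfl) (fun _ _ => rfl)
  have hC₁ (p) : p ∈ C₁.vertexSet ↔ (p i = C.lo i ∨ p i = c) ∧ off p := by
    rw [mem_vertexSet_iff_of_forall_ne (C := C) (fun j _ => by rw [hC₁lo])
        (fun j hj => by rw [hC₁hi, Function.update_of_ne hj]),
      hC₁lo, hC₁hi, Function.update_self]
  have hC₂ (p) : p ∈ C₂.vertexSet ↔ (p i = c ∨ p i = C.hi i) ∧ off p := by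
    rw [mem_vertexSet_iff_of_forall_ne (C := C)
        (fun j hj => by rw [hC₂lo, Function.update_of_ne hj]) (fun j _ => by rw [hC₂hi]),
      hC₂lo, hC₂hi, Function.update_self]
  have hcov_coord (p) (hp : p ∈ D.vertexSet) :
      (p i = C.lo i ∨ p i = c) ∧ off p ∨ (p i = c ∨ p i = C.hi i) ∧ off p := by
    rw [← hC₁, ← hC₂]
    exact hcov hp
  obtain ⟨q, hqD, hqC⟩ := Set.not_subset.mp hnot
  have hqi : q i = c := by
    rw [hC] at hqC
    have := hcov_coord q hqD
    tauto
  rcases mem_vertexSet_iff.1 hqD i with hDlo | hDhi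
  · refine Or.inr fun p hp => (hC₂ p).2 ?_
    have hcp : c ≤ p i := hqi ▸ hDlo ▸ (mem_Icc_of_mem_vertexSet hp i).1
    have hpi : p i ≠ C.lo i := by linarith
    have := hcov_coord p hp
    tauto
  · refine Or.inl fun p hp => (hC₁ p).2 ?_
    have hpc : p i ≤ c := hqi ▸ hDhi ▸ (mem_Icc_of_mem_vertexSet hp i).2
    have hpi : p i ≠ C.hi i := by linarith
    have := hcov_coord p hp
    tauto
end
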